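/- Splitting lemma: for a weak head context W and terms M, N of λ→m, the term W[(M; N)] weak-head reduces to ⋆ in exactly n steps if and only if there exist n₁, n₂ ≥ 0 with n = 1 + n₁ + n₂ such that M weak-head reduces to ⋆ in n₁ steps and W[N] weak-head reduces to ⋆ in n₂ steps. -/

import Mathlib

/-! The metacalculus λ→m for minimal logic: untyped λ-calculus extended with
a success constant ⋆, a guard construct (M; N), and generators ✠𝐚 / verifiers ⟨𝐚⟩
for atomic types. Terms use de Bruijn indices. -/

/-- Simple types: atomic types and arrows. -/
inductive Ty : Type
  | atom : ℕ → Ty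
  | arrow : Ty → Ty → Ty

/-- Metaterms of the metacalculus λ→m (de Bruijn indices). -/
inductive Tm : Type
  | var : ℕ → Tm
  | lam : Tm → Tm
  | app : Tm → Tm → Tm
  | star : Tm
  | guard : Tm → Tm → Tm
  | gen : ℕ → Tm
  | verif : ℕ → Tm → Tm

namespace Tm

/-- Shift de Bruijn indices ≥ c by d. -/
def shift (d c : ℕ) : Tm → Tm
  | var n => if n < c then var n else var (n + d)
  | lam M => lam (shift d (c+1) M)
  | app M N => app (shift d c M) (shift d c N)
  | star => star
  | guard M N => guard (shift d c M) (shift d c N)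
  | gen a => gen a
  | verif a M => verif a (shift d c M)

/-- Capture-avoiding substitution of the variable k by N. -/
def subst (k : ℕ) (N : Tm) : Tm → Tm
  | var n => if n = k then N else if k < n then var (n - 1) else var n
  | lam M => lam (subst (k+1) (shift 1 0 N) M)
  | app M P => app (subst k N M) (subst k N P)
  | star => star
  | guard M P => guard (subst k N M) (subst k N P)
  | gen a => gen a
  | verif a M => verif a (subst k N M)

/-- Pure metaterms: only variables, abstractions and applications. -/
def Pure : Tm → Prop
  | var _ => True
  | lam M => Pure M
  | app M N => Pure M ∧ Pure N
  | _ => False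

end Tm

/-- One-step reduction of λ→m, closed under arbitrary contexts. -/
inductive Step : Tm → Tm → Prop
  | beta (M N : Tm) : Step (.app (.lam M) N) (Tm.subst 0 N M)
  | guardStar (M : Tm) : Step (.guard .star M) M
  | verifGen (a : ℕ) : Step (.verif a (.gen a)) .star
  | lam {M M'} : Step M M' → Step (.lam M) (.lam M')
  | appL {M M'} (N) : Step M M' → Step (.app M N) (.app M' N)
  | appR {N N'} (M) : Step N N' → Step (.app M N) (.app M N')
  | guardL {M M'} (N) : Step M M' → Step (.guard M N) (.guard M' N)
  | guardR {N N'} (M) : Step N N' → Step (.guard M N) (.guard M N')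
  | verif {M M'} (a) : Step M M' → Step (.verif a M) (.verif a M')

/-- Weak head reduction of λ→m: the rules closed under weak head contexts only. -/
inductive WStep : Tm → Tm → Prop
  | beta (M N : Tm) : WStep (.app (.lam M) N) (Tm.subst 0 N M)
  | guardStar (M : Tm) : WStep (.guard .star M) M
  | verifGen (a : ℕ) : WStep (.verif a (.gen a)) .star
  | appL {M M'} (N) : WStep M M' → WStep (.app M N) (.app M' N)
  | guardL {M M'} (N) : WStep M M' → WStep (.guard M N) (.guard M' N)
  | verif {M M'} (a) : WStep M M' → WStep (.verif a M) (.verif a M')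

/-- β-reduction alone, closed under arbitrary contexts. -/
inductive BStep : Tm → Tm → Prop
  | beta (M N : Tm) : BStep (.app (.lam M) N) (Tm.subst 0 N M)
  | lam {M M'} : BStep M M' → BStep (.lam M) (.lam M')
  | appL {M M'} (N) : BStep M M' → BStep (.app M N) (.app M' N)
  | appR {N N'} (M) : BStep N N' → BStep (.app M N) (.app M N')
  | guardL {M M'} (N) : BStep M M' → BStep (.guard M N) (.guard M' N)
  | guardR {N N'} (M) : BStep N N' → BStep (.guard M N) (.guard M N')
  | verif {M M'} (a) : BStep M M' → BStep (.verif a M) (.verif a M')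

mutual
/-- The generator ✠A for an arbitrary simple type A. -/
def genT : Ty → Tm
  | .atom a => .gen a
  | .arrow A B => .lam (.guard (verifT A (.var 0)) (genT B))
/-- The verifier ⟨A⟩M for an arbitrary simple type A applied to M. -/
def verifT : Ty → Tm → Tm
  | .atom a, M => .verif a M
  | .arrow A B, M => verifT B (.app M (genT A))
end



/-- Weak head contexts W ::= □ | W M | (W; M) | ⟨𝐚⟩W. -/
inductive WCtx : Type
  | hole : WCtx
  | app : WCtx → Tm → WCtx
  | guard : WCtx → Tm → WCtx
  | verif : ℕ → WCtx → WCtx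

/-- Plugging a term into the hole of a weak head context. -/
def WCtx.plug : WCtx → Tm → Tm
  | .hole, M => M
  | .app W N, M => .app (W.plug M) N
  | .guard W N, M => .guard (W.plug M) N
  | .verif a W, M => .verif a (W.plug M)

/-- n-step weak head reduction. -/
inductive WStepN : ℕ → Tm → Tm → Prop
  | refl (M : Tm) : WStepN 0 M M
  | head {M N P : Tm} {n : ℕ} : WStep M N → WStepN n N P → WStepN (n+1) M P

/-! A weak head reduction of `W[(M; N)]` can only reduce inside `M` until `M` becomes `⋆`, so
every reduction to `⋆` is a reduction of `M` to `⋆` inside the context `W[(□; N)]`, followed by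
the step `(⋆; N) → N` and a reduction of `W[N]` to `⋆`. -/

theorem WStep.plug (W : WCtx) {X Y : Tm} (h : WStep X Y) : WStep (W.plug X) (W.plug Y) := by
  induction W with
  | hole => exact h
  | app W P ih => exact .appL P ih
  | guard W P ih => exact .guardL P ih
  | verif a W ih => exact .verif a ih

theorem WStepN.map {f : Tm → Tm} (hf : ∀ {X Y : Tm}, WStep X Y → WStep (f X) (f Y))
    {n : ℕ} {X Y : Tm} (h : WStepN n X Y) : WStepN n (f X) (f Y) := by
  induction h with
  | refl X => exact .refl _
  | head s _ ih => exact .head (hf s) ih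

theorem WStepN.trans {m n : ℕ} {X Y Z : Tm} (h₁ : WStepN m X Y) (h₂ : WStepN n Y Z) :
    WStepN (m + n) X Z := by
  induction h₁ with
  | refl => simpa using h₂
  | head s _ ih => rw [Nat.add_right_comm]; exact .head s (ih h₂)

theorem WCtx.plug_guard_ne_star (W : WCtx) (M N : Tm) : W.plug (.guard M N) ≠ .star := by
  cases W <;> simp [WCtx.plug]

theorem WStep.plug_guard_inv {W : WCtx} {M N Q : Tm} (h : WStep (W.plug (.guard M N)) Q) :
    (M = .star ∧ Q = W.plug N) ∨ ∃ M', WStep M M' ∧ Q = W.plug (.guard M' N) := by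
  induction W generalizing Q with
  | hole =>
    cases h with
    | guardStar => exact .inl ⟨rfl, rfl⟩
    | guardL _ h => exact .inr ⟨_, h, rfl⟩
  | app W P ih =>
    rw [WCtx.plug] at h
    generalize hT : W.plug (.guard M N) = T at h
    cases h with
    | beta => cases W <;> simp [WCtx.plug] at hT
    | appL _ h =>
      subst hT
      rcases ih h with ⟨rfl, rfl⟩ | ⟨M', hM, rfl⟩
      exacts [.inl ⟨rfl, rfl⟩, .inr ⟨M', hM, rfl⟩]
  | guard W P ih =>
    rw [WCtx.plug] at h
    generalize hT : W.plug (.guard M N) = T at h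
    cases h with
    | guardStar => exact absurd hT (W.plug_guard_ne_star M N)
    | guardL _ h =>
      subst hT
      rcases ih h with ⟨rfl, rfl⟩ | ⟨M', hM, rfl⟩
      exacts [.inl ⟨rfl, rfl⟩, .inr ⟨M', hM, rfl⟩]
  | verif a W ih =>
    rw [WCtx.plug] at h
    generalize hT : W.plug (.guard M N) = T at h
    cases h with
    | verifGen => cases W <;> simp [WCtx.plug] at hT
    | verif _ h =>
      subst hT
      rcases ih h with ⟨rfl, rfl⟩ | ⟨M', hM, rfl⟩
      exacts [.inl ⟨rfl, rfl⟩, .inr ⟨M', hM, rfl⟩]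

theorem WStepN.split_of_plug_guard {W : WCtx} {M N : Tm} {n : ℕ}
    (h : WStepN n (W.plug (.guard M N)) .star) :
    ∃ n₁ n₂ : ℕ, n = 1 + n₁ + n₂ ∧ WStepN n₁ M .star ∧ WStepN n₂ (W.plug N) .star := by
  induction n generalizing M with
  | zero =>
    generalize hT : W.plug (.guard M N) = T at h
    cases h
    exact absurd hT (W.plug_guard_ne_star M N)
  | succ n ih =>
    obtain _ | ⟨s, h⟩ := h
    rcases s.plug_guard_inv with ⟨rfl, rfl⟩ | ⟨M', hM, rfl⟩
    · exact ⟨0, n, by omega, .refl _, h⟩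
    · obtain ⟨n₁, n₂, rfl, hM', hN⟩ := ih h
      exact ⟨n₁ + 1, n₂, by omega, .head hM hM', hN⟩

/-- Splitting: W[(M; N)] weak-head reduces to ⋆ in exactly n steps
iff there are n₁, n₂ with n = 1 + n₁ + n₂, M →w^{n₁} ⋆ and W[N] →w^{n₂} ⋆. -/
theorem splitting (W : WCtx) (M N : Tm) (n : ℕ) :
    WStepN n (W.plug (.guard M N)) .star ↔
      ∃ n₁ n₂ : ℕ, n = 1 + n₁ + n₂ ∧ WStepN n₁ M .star ∧ WStepN n₂ (W.plug N) .star := by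
  refine ⟨WStepN.split_of_plug_guard, ?_⟩
  rintro ⟨n₁, n₂, rfl, hM, hN⟩
  have hGuard : WStepN n₁ (W.plug (.guard M N)) (W.plug (.guard .star N)) :=
    hM.map fun s => (WStep.guardL N s).plug W
  have hStar : WStepN (n₂ + 1) (W.plug (.guard .star N)) .star :=
    .head ((WStep.guardStar N).plug W) hN
  simpa only [Nat.add_comm 1, Nat.add_assoc] using hGuard.trans hStar
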